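/- arXiv:1004.4021 — 2 statements merged into one kernel-verified Lean document; each statement's English description precedes it below -/
import Mathlib

section
/- (Blowup for strongly singular kernels) Let n ≥ 1 and let K : ℝⁿ → ℝ be radially symmetric, K(x) = k(|x|) with k differentiable on (0,∞), and assume there exist δ > 0, γ > 0, and C > 0 such that s k′(s) ≤ −γ for all 0 < s ≤ δ and |s k′(s)| ≤ C s² for all s ≥ δ. Let u₀ ∈ L¹(ℝⁿ) satisfy u₀ ≥ 0 and ∫_{ℝⁿ} |x|² u₀(x) dx < ∞, set I(0) = ∫_{ℝⁿ} |x|² u₀(x) dx and M = ∫_{ℝⁿ} u₀(x) dx, and assume M > (2n + 4(C + γ/δ²) I(0))/γ. Then there exists no nonnegative solution u of the aggregation equation with initial datum u₀ defined for all t ∈ [0, ∞) such that: u(·,t) ∈ L¹(ℝⁿ) with ∫ u(x,t) dx = M for all t, the second moment I(t) = ∫_{ℝⁿ} |x|² u(x,t) dx is finite and differentiable in t, and I′(t) = 2nM + ∫∫_{ℝⁿ×ℝⁿ} u(x,t) u(y,t) |x−y| k′(|x−y|) dx dy for all t > 0. Indeed, for any such solution, I′(t) ≤ M(2n − γM + 4(C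 + γ/δ²) I(0)) < 0 for all t in its interval of existence, so the solution cannot exist beyond time T = I(0) / (M(γM − 2n − 4(C + γ/δ²) I(0))). -/
open MeasureTheory Real Set
open scoped ENNReal

noncomputable section


lemma dbl_bound (n : ℕ) (hn : 1 ≤ n) (k : ℝ → ℝ) (γ α : ℝ)
    (hbd : ∀ s : ℝ, 0 < s → s * deriv k s ≤ -γ + α * s ^ 2) (hα : 0 ≤ α)
    (f : EuclideanSpace ℝ (Fin n) → ℝ) (hf : Integrable f volume)
    (hfpos : 0 ≤ᵐ[volume] f)
    (hg : Integrable (fun x => ‖x‖ ^ 2 * f x) volume)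
    (hint : Integrable (fun p : EuclideanSpace ℝ (Fin n) × EuclideanSpace ℝ (Fin n) =>
        f p.1 * f p.2 * (‖p.1 - p.2‖ * deriv k ‖p.1 - p.2‖)) (volume.prod volume)) :
    (∫ p : EuclideanSpace ℝ (Fin n) × EuclideanSpace ℝ (Fin n),
        f p.1 * f p.2 * (‖p.1 - p.2‖ * deriv k ‖p.1 - p.2‖) ∂(volume.prod volume)) ≤
      -γ * (∫ x, f x) ^ 2 + 4 * α * (∫ x, f x) * (∫ x, ‖x‖ ^ 2 * f x) := by
  haveI : Nonempty (Fin n) := ⟨⟨0, hn⟩⟩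
  set H : EuclideanSpace ℝ (Fin n) × EuclideanSpace ℝ (Fin n) → ℝ := fun p =>
    -γ * (f p.1 * f p.2) + 2 * α * (‖p.1‖ ^ 2 * f p.1 * f p.2) +
      2 * α * (f p.1 * (‖p.2‖ ^ 2 * f p.2)) with hHdef
  have hHint : Integrable H (volume.prod volume) := by
    have := (((hf.mul_prod hf).const_mul (-γ)).add ((hg.mul_prod hf).const_mul (2 * α))).add
      ((hf.mul_prod hg).const_mul (2 * α))
    exact this.congr (Filter.Eventually.of_forall fun p => by simp [hHdef])
  have h1 : ∀ᵐ p : EuclideanSpace ℝ (Fin n) × EuclideanSpace ℝ (Fin n) ∂(volume.prod volume),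
      0 ≤ f p.1 :=
    Measure.quasiMeasurePreserving_fst.ae (p := fun x => 0 ≤ f x)
      (by filter_upwards [hfpos] with x hx using hx)
  have h2 : ∀ᵐ p : EuclideanSpace ℝ (Fin n) × EuclideanSpace ℝ (Fin n) ∂(volume.prod volume),
      0 ≤ f p.2 :=
    Measure.quasiMeasurePreserving_snd.ae (p := fun x => 0 ≤ f x)
      (by filter_upwards [hfpos] with x hx using hx)
  have hdiag : ∀ᵐ p : EuclideanSpace ℝ (Fin n) × EuclideanSpace ℝ (Fin n) ∂(volume.prod volume),
      p.1 ≠ p.2 := by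
    have hmeas : MeasurableSet {p : EuclideanSpace ℝ (Fin n) × EuclideanSpace ℝ (Fin n) | p.1 = p.2} :=
      (isClosed_eq continuous_fst continuous_snd).measurableSet
    rw [ae_iff]
    have he : {p : EuclideanSpace ℝ (Fin n) × EuclideanSpace ℝ (Fin n) | ¬ p.1 ≠ p.2} =
        {p : EuclideanSpace ℝ (Fin n) × EuclideanSpace ℝ (Fin n) | p.1 = p.2} := by ext p; simp
    rw [he, Measure.measure_prod_null hmeas]
    filter_upwards with x
    have : (Prod.mk x ⁻¹' {p : EuclideanSpace ℝ (Fin n) × EuclideanSpace ℝ (Fin n) | p.1 = p.2})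
        = {x} := by ext y; simp [eq_comm]
    rw [this]; exact measure_singleton x
  have hae : (fun p : EuclideanSpace ℝ (Fin n) × EuclideanSpace ℝ (Fin n) =>
      f p.1 * f p.2 * (‖p.1 - p.2‖ * deriv k ‖p.1 - p.2‖)) ≤ᵐ[volume.prod volume] H := by
    filter_upwards [h1, h2, hdiag] with p hp1 hp2 hne
    have hs : 0 < ‖p.1 - p.2‖ := by
      rw [norm_pos_iff]; exact sub_ne_zero.mpr hne
    have hb := hbd _ hs
    have htri : ‖p.1 - p.2‖ ≤ ‖p.1‖ + ‖p.2‖ := norm_sub_le p.1 p.2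
    have hnorm : ‖p.1 - p.2‖ ^ 2 ≤ 2 * ‖p.1‖ ^ 2 + 2 * ‖p.2‖ ^ 2 := by
      nlinarith [mul_self_le_mul_self (norm_nonneg (p.1 - p.2)) htri, sq_nonneg (‖p.1‖ - ‖p.2‖)]
    have hkey : ‖p.1 - p.2‖ * deriv k ‖p.1 - p.2‖ ≤
        -γ + 2 * α * (‖p.1‖ ^ 2 + ‖p.2‖ ^ 2) := by nlinarith
    have hmul : 0 ≤ f p.1 * f p.2 := mul_nonneg hp1 hp2
    calc f p.1 * f p.2 * (‖p.1 - p.2‖ * deriv k ‖p.1 - p.2‖)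
        ≤ f p.1 * f p.2 * (-γ + 2 * α * (‖p.1‖ ^ 2 + ‖p.2‖ ^ 2)) :=
          mul_le_mul_of_nonneg_left hkey hmul
      _ = H p := by simp only [hHdef]; ring
  have hle := integral_mono_ae hint hHint hae
  refine hle.trans (le_of_eq ?_)
  have e1 : ∫ p : EuclideanSpace ℝ (Fin n) × EuclideanSpace ℝ (Fin n),
      f p.1 * f p.2 ∂(volume.prod volume) = (∫ x, f x) * (∫ x, f x) :=
    integral_prod_mul f f
  have e2 : ∫ p : EuclideanSpace ℝ (Fin n) × EuclideanSpace ℝ (Fin n),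
      ‖p.1‖ ^ 2 * f p.1 * f p.2 ∂(volume.prod volume) =
      (∫ x, ‖x‖ ^ 2 * f x) * (∫ x, f x) := by
    simpa using integral_prod_mul (fun x : EuclideanSpace ℝ (Fin n) => ‖x‖ ^ 2 * f x) f
  have e3 : ∫ p : EuclideanSpace ℝ (Fin n) × EuclideanSpace ℝ (Fin n),
      f p.1 * (‖p.2‖ ^ 2 * f p.2) ∂(volume.prod volume) =
      (∫ x, f x) * (∫ x, ‖x‖ ^ 2 * f x) := by
    simpa using integral_prod_mul f (fun x : EuclideanSpace ℝ (Fin n) => ‖x‖ ^ 2 * f x)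
  have hA : Integrable (fun p : EuclideanSpace ℝ (Fin n) × EuclideanSpace ℝ (Fin n) =>
      -γ * (f p.1 * f p.2)) (volume.prod volume) := (hf.mul_prod hf).const_mul (-γ)
  have hB : Integrable (fun p : EuclideanSpace ℝ (Fin n) × EuclideanSpace ℝ (Fin n) =>
      2 * α * (‖p.1‖ ^ 2 * f p.1 * f p.2)) (volume.prod volume) := (hg.mul_prod hf).const_mul (2 * α)
  have hC2 : Integrable (fun p : EuclideanSpace ℝ (Fin n) × EuclideanSpace ℝ (Fin n) =>
      2 * α * (f p.1 * (‖p.2‖ ^ 2 * f p.2))) (volume.prod volume) := (hf.mul_prod hg).const_mul (2 * α)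
  have t1 : ∫ a, H a ∂(volume.prod volume)
      = (∫ a : EuclideanSpace ℝ (Fin n) × EuclideanSpace ℝ (Fin n),
            (-γ * (f a.1 * f a.2) + 2 * α * (‖a.1‖ ^ 2 * f a.1 * f a.2)) ∂(volume.prod volume))
        + (∫ a : EuclideanSpace ℝ (Fin n) × EuclideanSpace ℝ (Fin n),
            2 * α * (f a.1 * (‖a.2‖ ^ 2 * f a.2)) ∂(volume.prod volume)) :=
    integral_add (hA.add hB) hC2
  have t2 : (∫ a : EuclideanSpace ℝ (Fin n) × EuclideanSpace ℝ (Fin n),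
            (-γ * (f a.1 * f a.2) + 2 * α * (‖a.1‖ ^ 2 * f a.1 * f a.2)) ∂(volume.prod volume))
      = (∫ a : EuclideanSpace ℝ (Fin n) × EuclideanSpace ℝ (Fin n),
            -γ * (f a.1 * f a.2) ∂(volume.prod volume))
        + (∫ a : EuclideanSpace ℝ (Fin n) × EuclideanSpace ℝ (Fin n),
            2 * α * (‖a.1‖ ^ 2 * f a.1 * f a.2) ∂(volume.prod volume)) :=
    integral_add hA hB
  rw [t1, t2, integral_const_mul, integral_const_mul, integral_const_mul, e1, e2, e3]
  ring

lemma scalar_bound (k : ℝ → ℝ) (δ γ C : ℝ) (hδ : 0 < δ) (hγ : 0 < γ) (hC : 0 < C)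
    (hsmall : ∀ s : ℝ, 0 < s → s ≤ δ → s * deriv k s ≤ -γ)
    (hlarge : ∀ s : ℝ, δ ≤ s → |s * deriv k s| ≤ C * s ^ 2) :
    ∀ s : ℝ, 0 < s → s * deriv k s ≤ -γ + (C + γ / δ ^ 2) * s ^ 2 := by
  intro s hs
  rcases le_or_gt s δ with h | h
  · have h1 := hsmall s hs h
    have h2 : 0 < C + γ / δ ^ 2 := by positivity
    nlinarith [sq_nonneg s]
  · have h1 := hlarge s h.le
    have h2 : s * deriv k s ≤ C * s ^ 2 := (le_abs_self _).trans h1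
    have hδ2 : (0:ℝ) < δ ^ 2 := by positivity
    have h3 : δ ^ 2 ≤ s ^ 2 := by nlinarith
    have h4 : γ ≤ γ / δ ^ 2 * s ^ 2 := by
      rw [div_mul_eq_mul_div, le_div_iff₀ hδ2]; nlinarith
    nlinarith

/-- **Finite-time blowup for strongly singular kernels.**  Let `K(x) = k(|x|)` be radial with
`k` differentiable on `(0,∞)`, and suppose that there are `δ > 0`, `γ > 0`, `C > 0` with
`s k′(s) ≤ -γ` for `0 < s ≤ δ` and `|s k′(s)| ≤ C s²` for `s ≥ δ`.  Let `u₀ ∈ L¹(ℝⁿ)` be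
nonnegative with finite second moment `I(0) = ∫ |x|² u₀`, mass `M = ∫ u₀`, and assume
`M > (2n + 4(C + γ/δ²) I(0))/γ`.  Then there is no nonnegative solution of the aggregation
equation with initial datum `u₀` defined for all `t ∈ [0,∞)` which conserves the mass `M`,
has finite, continuous second moment `I(t) = ∫ |x|² u(x,t)` differentiable for `t > 0`, and
satisfies the second-moment identity
`I′(t) = 2nM + ∬ u(x,t)u(y,t) |x-y| k′(|x-y|) dx dy`. -/
theorem blowup_strongly_singular (n : ℕ) (hn : 1 ≤ n) (k : ℝ → ℝ)
    (hk : ∀ s : ℝ, 0 < s → DifferentiableAt ℝ k s)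
    (δ γ C : ℝ) (hδ : 0 < δ) (hγ : 0 < γ) (hC : 0 < C)
    (hsmall : ∀ s : ℝ, 0 < s → s ≤ δ → s * deriv k s ≤ -γ)
    (hlarge : ∀ s : ℝ, δ ≤ s → |s * deriv k s| ≤ C * s ^ 2)
    (u₀ : EuclideanSpace ℝ (Fin n) → ℝ) (hu₀int : Integrable u₀ volume)
    (hu₀pos : 0 ≤ᵐ[volume] u₀)
    (hmom : Integrable (fun x => ‖x‖ ^ 2 * u₀ x) volume)
    (hM : (2 * n + 4 * (C + γ / δ ^ 2) * ∫ x, ‖x‖ ^ 2 * u₀ x) / γ < ∫ x, u₀ x) :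
    ¬ ∃ u : ℝ → EuclideanSpace ℝ (Fin n) → ℝ,
      (u 0 =ᵐ[volume] u₀) ∧
      (∀ t ∈ Ici (0 : ℝ), (0 ≤ᵐ[volume] u t) ∧ Integrable (u t) volume ∧
        (∫ x, u t x = ∫ x, u₀ x) ∧ Integrable (fun x => ‖x‖ ^ 2 * u t x) volume) ∧
      ContinuousOn (fun τ => ∫ x, ‖x‖ ^ 2 * u τ x) (Ici (0 : ℝ)) ∧
      (∀ t : ℝ, 0 < t →
        Integrable (fun p : EuclideanSpace ℝ (Fin n) × EuclideanSpace ℝ (Fin n) =>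
            u t p.1 * u t p.2 * (‖p.1 - p.2‖ * deriv k ‖p.1 - p.2‖))
          (volume.prod volume) ∧
        HasDerivAt (fun τ => ∫ x, ‖x‖ ^ 2 * u τ x)
          (2 * n * (∫ x, u₀ x) +
            ∫ p : EuclideanSpace ℝ (Fin n) × EuclideanSpace ℝ (Fin n),
              u t p.1 * u t p.2 * (‖p.1 - p.2‖ * deriv k ‖p.1 - p.2‖)
              ∂(volume.prod volume)) t) := by
  rintro ⟨u, hu0, hreg, hcont, hderiv⟩
  set α := C + γ / δ ^ 2 with hαdef
  have hα : 0 < α := by positivity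
  set I₀ := ∫ x, ‖x‖ ^ 2 * u₀ x with hI₀def
  set M := ∫ x, u₀ x with hMdef
  set I : ℝ → ℝ := fun τ => ∫ x, ‖x‖ ^ 2 * u τ x with hIdef
  have hI₀ : 0 ≤ I₀ := by
    apply integral_nonneg_of_ae
    filter_upwards [hu₀pos] with x hx
    exact mul_nonneg (by positivity) hx
  have hn' : (1:ℝ) ≤ (n:ℝ) := by exact_mod_cast hn
  have hM' : 2 * (n:ℝ) + 4 * α * I₀ < γ * M := by
    rw [div_lt_iff₀ hγ] at hM
    nlinarith
  have hMpos : 0 < M := by nlinarith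
  set ε := γ * M - 2 * n - 4 * α * I₀ with hεdef
  have hε : 0 < ε := by simp only [hεdef]; linarith
  set B := I₀ + ε / (8 * α) with hBdef
  have hI₀B : I₀ < B := by
    have : 0 < ε / (8 * α) := by positivity
    simp only [hBdef]; linarith
  have hI0eq : I 0 = I₀ := by
    apply integral_congr_ae
    filter_upwards [hu0] with x hx
    rw [hx]
  have hInonneg : ∀ t : ℝ, 0 ≤ t → 0 ≤ I t := by
    intro t ht
    apply integral_nonneg_of_ae
    filter_upwards [(hreg t ht).1] with x hx
    exact mul_nonneg (by positivity) hx
  -- the key differential inequality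
  have key : ∀ t : ℝ, 0 < t → deriv I t ≤ M * (2 * n - γ * M) + 4 * α * M * I t := by
    intro t ht
    obtain ⟨hint, hd⟩ := hderiv t ht
    obtain ⟨hpos, hL1, hmass, hmom2⟩ := hreg t ht.le
    have hdbl := dbl_bound n hn k γ α
      (scalar_bound k δ γ C hδ hγ hC hsmall hlarge) hα.le (u t) hL1 hpos hmom2 hint
    rw [hmass] at hdbl
    have := hd.deriv
    rw [this]
    nlinarith
  have hdiff : ∀ t : ℝ, 0 < t → DifferentiableAt ℝ I t := fun t ht =>
    (hderiv t ht).2.differentiableAt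
  -- derivative bound when I t ≤ B
  have hαne : α ≠ 0 := ne_of_gt hα
  have keyB : ∀ t : ℝ, 0 < t → I t ≤ B → deriv I t ≤ -(M * ε / 2) := by
    intro t ht hIt
    have h1 := key t ht
    have h40 : (0:ℝ) ≤ 4 * α * M := by
      have := mul_nonneg (mul_nonneg (by norm_num : (0:ℝ) ≤ 4) hα.le) hMpos.le
      linarith
    have h2 : 4 * α * M * I t ≤ 4 * α * M * B := mul_le_mul_of_nonneg_left hIt h40
    have h3 : M * (2 * n - γ * M) + 4 * α * M * B = -(M * ε / 2) := by
      simp only [hBdef, hεdef]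
      field_simp
      ring
    have h4 : M * (2 * ↑n - γ * M) + 4 * α * M * I t ≤ M * (2 * ↑n - γ * M) + 4 * α * M * B := by
      linarith
    rw [← h3]
    exact h1.trans h4
  -- I stays below B
  have claimB : ∀ t : ℝ, 0 ≤ t → I t < B := by
    by_contra hcon
    push_neg at hcon
    obtain ⟨t₂, ht₂0, ht₂B⟩ := hcon
    set S := {t : ℝ | 0 ≤ t ∧ B ≤ I t} with hSdef
    have hSne : S.Nonempty := ⟨t₂, ht₂0, ht₂B⟩
    have hbdd : BddBelow S := ⟨0, fun x hx => hx.1⟩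
    have hclosed : IsClosed S := by
      have : S = Ici (0:ℝ) ∩ I ⁻¹' (Ici B) := by
        ext t
        constructor
        · exact fun h => ⟨h.1, h.2⟩
        · exact fun h => ⟨h.1, h.2⟩
      rw [this]
      exact hcont.preimage_isClosed_of_isClosed isClosed_Ici isClosed_Ici
    set t₁ := sInf S with ht₁def
    have ht₁S : t₁ ∈ S := hclosed.csInf_mem hSne hbdd
    have ht₁pos : 0 < t₁ := by
      rcases ht₁S.1.lt_or_eq with h | h
      · exact h
      · exfalso
        have hb2 := ht₁S.2
        rw [← h] at hb2
        rw [hI0eq] at hb2; linarith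
    have hlt : ∀ s : ℝ, s ∈ Ico (0:ℝ) t₁ → I s < B := by
      intro s hs
      by_contra hsB
      push_neg at hsB
      exact absurd (csInf_le hbdd ⟨hs.1, hsB⟩) (not_le.mpr hs.2)
    have hanti : AntitoneOn I (Icc 0 t₁) := by
      apply antitoneOn_of_deriv_nonpos (convex_Icc 0 t₁)
        (hcont.mono (Icc_subset_Ici_self))
      · intro x hx
        rw [interior_Icc] at hx
        exact (hdiff x hx.1).differentiableWithinAt
      · intro x hx
        rw [interior_Icc] at hx
        have := keyB x hx.1 (hlt x ⟨hx.1.le, hx.2⟩).le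
        have hpos : 0 < M * ε / 2 := div_pos (mul_pos hMpos hε) two_pos
        linarith
    have h1 : I t₁ ≤ I 0 := hanti ⟨le_rfl, ht₁pos.le⟩ ⟨ht₁pos.le, le_rfl⟩ ht₁pos.le
    rw [hI0eq] at h1
    have := ht₁S.2
    linarith
  -- conclude with linear decay
  set c := M * ε / 2 with hcdef
  have hc : 0 < c := by rw [hcdef]; exact div_pos (mul_pos hMpos hε) two_pos
  set T := (I₀ + 1) / c with hTdef
  have hT : 0 < T := by rw [hTdef]; exact div_pos (by linarith) hc
  set g : ℝ → ℝ := fun t => I t + c * t with hgdef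
  have hganti : AntitoneOn g (Icc 0 T) := by
    apply antitoneOn_of_deriv_nonpos (convex_Icc 0 T)
    · exact ((hcont.mono Icc_subset_Ici_self).add
        ((continuous_const.mul continuous_id).continuousOn))
    · intro x hx
      rw [interior_Icc] at hx
      have hdg : HasDerivAt g (deriv I x + c) x := by
        have h1 : HasDerivAt I (deriv I x) x := (hdiff x hx.1).hasDerivAt
        have h2 : HasDerivAt (fun t : ℝ => c * t) c x := by
          simpa using (hasDerivAt_id x).const_mul c
        exact h1.add h2
      exact hdg.differentiableAt.differentiableWithinAt
    · intro x hx
      rw [interior_Icc] at hx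
      have hdg : HasDerivAt g (deriv I x + c) x := by
        have h1 : HasDerivAt I (deriv I x) x := (hdiff x hx.1).hasDerivAt
        have h2 : HasDerivAt (fun t : ℝ => c * t) c x := by
          simpa using (hasDerivAt_id x).const_mul c
        exact h1.add h2
      rw [hdg.deriv]
      have := keyB x hx.1 (claimB x hx.1.le).le
      linarith
  have h1 : g T ≤ g 0 := hganti ⟨le_rfl, hT.le⟩ ⟨hT.le, le_rfl⟩ hT.le
  have h2 : g 0 = I₀ := by simp [hgdef, hI0eq]
  have h3 : c * T = I₀ + 1 := by
    rw [hTdef]; field_simp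
  have h4 : g T = I T + c * T := rfl
  have h5 := hInonneg T hT.le
  rw [h2, h4, h3] at h1
  linarith

end
end

section
/- Let k : (0, ∞) → ℝ be measurable, and assume there exist δ > 0, γ > 0, and C > 0 such that s k′(s) ≤ −γ for all 0 < s ≤ δ and |s k′(s)| ≤ C s² for all s ≥ δ, where k′ is the derivative of k. Let f ∈ L¹(ℝⁿ) be nonnegative with M = ∫_{ℝⁿ} f(x) dx and I = ∫_{ℝⁿ} |x|² f(x) dx < ∞. Then ∫∫_{ℝⁿ×ℝⁿ} f(x) f(y) |x − y| k′(|x − y|) dx dy ≤ −γ M² + 4(C + γ/δ²) M I. -/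
/-!
Off the diagonal, which is null for Lebesgue measure when `n ≥ 1`, the two hypotheses on `k`
combine into the single bound `s k′(s) ≤ -γ + (C + γ/δ²) s²` for all `s > 0`: for `s ≤ δ` the
quadratic term is nonnegative, and for `s ≥ δ` one has `γ ≤ γ s²/δ²`. With
`|x - y|² ≤ 2(|x|² + |y|²)` the integrand is dominated by
`f(x) f(y) (-γ + 2(C + γ/δ²)(|x|² + |y|²))`, whose integral factors by Fubini into
`-γ M² + 4(C + γ/δ²) M I`.
-/

open MeasureTheory

theorem nonneg_of_abs_le_mul_sq {a C s : ℝ} (hs : s ≠ 0) (h : |a| ≤ C * s ^ 2) : 0 ≤ C :=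
  nonneg_of_mul_nonneg_left ((abs_nonneg a).trans h) (by positivity)

theorem le_neg_add_mul_sq_of_le_neg_of_abs_le {φ : ℝ → ℝ} {δ γ C : ℝ} (hδ : 0 < δ)
    (hγ : 0 ≤ γ) (hsmall : ∀ s, 0 < s → s ≤ δ → φ s ≤ -γ)
    (hlarge : ∀ s, δ ≤ s → |φ s| ≤ C * s ^ 2) {s : ℝ} (hs : 0 < s) :
    φ s ≤ -γ + (C + γ / δ ^ 2) * s ^ 2 := by
  have hδ2 : 0 < δ ^ 2 := by positivity
  rcases le_total s δ with hsδ | hδs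
  · have hC := nonneg_of_abs_le_mul_sq hδ.ne' (hlarge δ le_rfl)
    have : 0 ≤ (C + γ / δ ^ 2) * s ^ 2 := by positivity
    linarith [hsmall s hs hsδ]
  · have hγs : γ ≤ γ / δ ^ 2 * s ^ 2 := by
      rw [div_mul_eq_mul_div, le_div_iff₀ hδ2]
      gcongr
    linarith [le_abs_self (φ s), hlarge s hδs]

theorem sq_norm_sub_le {E : Type*} [SeminormedAddCommGroup E] (x y : E) :
    ‖x - y‖ ^ 2 ≤ 2 * (‖x‖ ^ 2 + ‖y‖ ^ 2) :=
  (pow_le_pow_left₀ (norm_nonneg _) (norm_sub_le x y) 2).trans add_sq_le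

theorem ae_prod_fst_ne_snd {α : Type*} [MeasurableSpace α] [MeasurableEq α]
    {μ ν : Measure α} [SFinite ν] [NullSingletonClass ν] : ∀ᵐ p ∂μ.prod ν, p.1 ≠ p.2 :=
  (Measure.ae_prod_mem_iff_ae_ae_mem measurableSet_diagonal.compl).2 <|
    .of_forall fun x => (Measure.ae_ne ν x).mono fun _ => Ne.symm

section AffineWeight

variable {α : Type*} [MeasurableSpace α] {μ : Measure α} {f w : α → ℝ}

theorem integrable_prod_mul_mul_affine (hf : Integrable f μ)
    (hwf : Integrable (fun x => w x * f x) μ) (a b : ℝ) :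
    Integrable (fun p : α × α => f p.1 * f p.2 * (a + b * (w p.1 + w p.2))) (μ.prod μ) :=
  (((hf.mul_prod hf).const_mul a).add
      (((hwf.mul_prod hf).add (hf.mul_prod hwf)).const_mul b)).congr
    (.of_forall fun p => by simp only [Pi.add_apply]; ring)

theorem integral_prod_mul_mul_affine [SFinite μ] (hf : Integrable f μ)
    (hwf : Integrable (fun x => w x * f x) μ) (a b : ℝ) :
    ∫ p : α × α, f p.1 * f p.2 * (a + b * (w p.1 + w p.2)) ∂μ.prod μ =
      a * (∫ x, f x ∂μ) ^ 2 + 2 * b * (∫ x, f x ∂μ) * ∫ x, w x * f x ∂μ := by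
  have hsplit : (fun p : α × α => f p.1 * f p.2 * (a + b * (w p.1 + w p.2))) = fun p =>
      a * (f p.1 * f p.2) + b * (w p.1 * f p.1 * f p.2 + f p.1 * (w p.2 * f p.2)) := by
    funext p; ring
  have hff := hf.mul_prod hf
  have hwff := hwf.mul_prod hf
  have hfwf := hf.mul_prod hwf
  rw [hsplit, integral_add, integral_const_mul, integral_const_mul, integral_add hwff hfwf,
    integral_prod_mul f f, integral_prod_mul (fun x => w x * f x) f,
    integral_prod_mul f (fun x => w x * f x)]
  · ring
  exacts [hff.const_mul a, (hwff.add hfwf).const_mul b]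

end AffineWeight

theorem moment_double_integral_estimate_general (n : ℕ) (hn : 1 ≤ n) (k : ℝ → ℝ)
    (δ γ C : ℝ) (hδ : 0 < δ) (hγ : 0 < γ)
    (hsmall : ∀ s : ℝ, 0 < s → s ≤ δ → s * deriv k s ≤ -γ)
    (hlarge : ∀ s : ℝ, δ ≤ s → |s * deriv k s| ≤ C * s ^ 2)
    (f : EuclideanSpace ℝ (Fin n) → ℝ) (hf : Integrable f volume)
    (hfpos : 0 ≤ᵐ[volume] f)
    (hmom : Integrable (fun x => ‖x‖ ^ 2 * f x) volume)
    (hint : Integrable (fun p : EuclideanSpace ℝ (Fin n) × EuclideanSpace ℝ (Fin n) =>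
        f p.1 * f p.2 * (‖p.1 - p.2‖ * deriv k ‖p.1 - p.2‖)) (volume.prod volume)) :
    (∫ p : EuclideanSpace ℝ (Fin n) × EuclideanSpace ℝ (Fin n),
        f p.1 * f p.2 * (‖p.1 - p.2‖ * deriv k ‖p.1 - p.2‖) ∂(volume.prod volume)) ≤
      -γ * (∫ x, f x) ^ 2 +
        4 * (C + γ / δ ^ 2) * (∫ x, f x) * ∫ x, ‖x‖ ^ 2 * f x := by
  have : Nonempty (Fin n) := ⟨⟨0, hn⟩⟩
  set c := C + γ / δ ^ 2
  have hc : 0 ≤ c := by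
    have := nonneg_of_abs_le_mul_sq hδ.ne' (hlarge δ le_rfl)
    positivity
  have hbound : ∀ᵐ p ∂(volume.prod volume : Measure (EuclideanSpace ℝ (Fin n) × _)),
      f p.1 * f p.2 * (‖p.1 - p.2‖ * deriv k ‖p.1 - p.2‖) ≤
        f p.1 * f p.2 * (-γ + 2 * c * (‖p.1‖ ^ 2 + ‖p.2‖ ^ 2)) := by
    filter_upwards [Measure.quasiMeasurePreserving_fst.ae hfpos,
      Measure.quasiMeasurePreserving_snd.ae hfpos, ae_prod_fst_ne_snd] with p hx hy hxy
    have hk := le_neg_add_mul_sq_of_le_neg_of_abs_le (φ := fun s => s * deriv k s) hδ hγ.le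
      hsmall hlarge (norm_sub_pos_iff.2 hxy)
    have := mul_le_mul_of_nonneg_left (sq_norm_sub_le p.1 p.2) hc
    exact mul_le_mul_of_nonneg_left (by linarith) (mul_nonneg hx hy)
  calc _ ≤ _ := integral_mono_ae hint (integrable_prod_mul_mul_affine hf hmom _ _) hbound
    _ = _ := by rw [integral_prod_mul_mul_affine hf hmom]; ring

/-- **The key moment estimate.**  Let `k` be such that `s k′(s) ≤ -γ` for `0 < s ≤ δ` and
`|s k′(s)| ≤ C s²` for `s ≥ δ`, with `δ, γ, C > 0`.  Let `f ∈ L¹(ℝⁿ)` be nonnegative with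
mass `M = ∫ f` and finite second moment `I = ∫ |x|² f`.  Then
`∬ f(x) f(y) |x-y| k′(|x-y|) dx dy ≤ -γ M² + 4(C + γ/δ²) M I`. -/
theorem moment_double_integral_estimate (n : ℕ) (hn : 1 ≤ n) (k : ℝ → ℝ)
    (δ γ C : ℝ) (hδ : 0 < δ) (hγ : 0 < γ) (hC : 0 < C)
    (hsmall : ∀ s : ℝ, 0 < s → s ≤ δ → s * deriv k s ≤ -γ)
    (hlarge : ∀ s : ℝ, δ ≤ s → |s * deriv k s| ≤ C * s ^ 2)
    (f : EuclideanSpace ℝ (Fin n) → ℝ) (hf : Integrable f volume)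
    (hfpos : 0 ≤ᵐ[volume] f)
    (hmom : Integrable (fun x => ‖x‖ ^ 2 * f x) volume)
    (hint : Integrable (fun p : EuclideanSpace ℝ (Fin n) × EuclideanSpace ℝ (Fin n) =>
        f p.1 * f p.2 * (‖p.1 - p.2‖ * deriv k ‖p.1 - p.2‖)) (volume.prod volume)) :
    (∫ p : EuclideanSpace ℝ (Fin n) × EuclideanSpace ℝ (Fin n),
        f p.1 * f p.2 * (‖p.1 - p.2‖ * deriv k ‖p.1 - p.2‖) ∂(volume.prod volume)) ≤
      -γ * (∫ x, f x) ^ 2 +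
        4 * (C + γ / δ ^ 2) * (∫ x, f x) * ∫ x, ‖x‖ ^ 2 * f x :=
  moment_double_integral_estimate_general n hn k δ γ C hδ hγ hsmall hlarge f hf hfpos hmom hint
end
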